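/- The braid relation T_1 T_2 T_1 = T_2 T_1 T_2 holds for the Demazure–Lusztig operators acting on rational functions in three variables. -/

import Mathlib

open MvPolynomial

/-!
Write `T_i = t - a_i (1 - s_i)` with `a_1 = (t x_1 - x_2)/(x_1 - x_2)`, `a_2 = (t x_2 - x_3)/(x_2 - x_3)`.
Then `s_1 a_1 = t + 1 - a_1`, `s_2 a_2 = t + 1 - a_2`, and `s_1 a_2 = s_2 a_1 = c := (t x_1 - x_3)/(x_1 - x_3)`.
Expanding both sides of the braid relation with `s_i² = 1` and `s_1 s_2 s_1 = s_2 s_1 s_2`, their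
difference is a multiple of `c (a_1 + a_2 - t - 1) - (a_1 a_2 - t)`, and this vanishes by a direct
computation with the three coefficients.
-/

section DemazureLusztig

variable {R : Type*} [CommRing R]

def demazureLusztig (s : R →+* R) (t a g : R) : R := t * g - a * (g - s g)

theorem demazureLusztig_braid {s₁ s₂ : R →+* R} {t a b c : R}
    (hs₁ : ∀ g, s₁ (s₁ g) = g) (hs₂ : ∀ g, s₂ (s₂ g) = g)
    (hs : ∀ g, s₂ (s₁ (s₂ g)) = s₁ (s₂ (s₁ g)))
    (ht₁ : s₁ t = t) (ht₂ : s₂ t = t)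
    (ha₁ : s₁ a = t + 1 - a) (hb₂ : s₂ b = t + 1 - b) (hb₁ : s₁ b = c) (ha₂ : s₂ a = c)
    (hc : c * (a + b - t - 1) = a * b - t) (g : R) :
    demazureLusztig s₁ t a (demazureLusztig s₂ t b (demazureLusztig s₁ t a g)) =
      demazureLusztig s₂ t b (demazureLusztig s₁ t a (demazureLusztig s₂ t b g)) := by
  have hc₁ : s₁ c = b := by rw [← hb₁, hs₁]
  have hc₂ : s₂ c = a := by rw [← ha₂, hs₂]
  simp only [demazureLusztig, map_sub, map_mul, hs₁, hs₂, hs, ht₁, ht₂, ha₁, hb₂, hb₁, ha₂,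
    hc₁, hc₂]
  linear_combination (s₂ g * b - s₁ g * a - g * b + g * a) * hc

end DemazureLusztig

section Field

variable {F : Type*} [Field F]

theorem div_sub_comm_eq_add_one_sub_div (t x y : F) (h : x - y ≠ 0) :
    (t * y - x) / (y - x) = t + 1 - (t * x - y) / (x - y) := by
  have h' : y - x ≠ 0 := fun e => h (by linear_combination -e)
  field_simp
  ring

theorem div_sub_yang_baxter (t x y z : F) (hxy : x - y ≠ 0) (hyz : y - z ≠ 0) (hxz : x - z ≠ 0) :
    (t * x - z) / (x - z) * ((t * x - y) / (x - y) + (t * y - z) / (y - z) - t - 1) =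
      (t * x - y) / (x - y) * ((t * y - z) / (y - z)) - t := by
  field_simp
  ring

theorem demazureLusztig_braid_of_swap {s₁ s₂ : F →+* F} {t x₀ x₁ x₂ : F}
    (hs₁ : ∀ g, s₁ (s₁ g) = g) (hs₂ : ∀ g, s₂ (s₂ g) = g)
    (hs : ∀ g, s₂ (s₁ (s₂ g)) = s₁ (s₂ (s₁ g))) (ht₁ : s₁ t = t) (ht₂ : s₂ t = t)
    (hs₁x₀ : s₁ x₀ = x₁) (hs₁x₁ : s₁ x₁ = x₀) (hs₁x₂ : s₁ x₂ = x₂)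
    (hs₂x₀ : s₂ x₀ = x₀) (hs₂x₁ : s₂ x₁ = x₂) (hs₂x₂ : s₂ x₂ = x₁)
    (h₀₁ : x₀ - x₁ ≠ 0) (h₁₂ : x₁ - x₂ ≠ 0) (h₀₂ : x₀ - x₂ ≠ 0) (g : F) :
    demazureLusztig s₁ t ((t * x₀ - x₁) / (x₀ - x₁))
        (demazureLusztig s₂ t ((t * x₁ - x₂) / (x₁ - x₂))
          (demazureLusztig s₁ t ((t * x₀ - x₁) / (x₀ - x₁)) g)) =
      demazureLusztig s₂ t ((t * x₁ - x₂) / (x₁ - x₂))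
        (demazureLusztig s₁ t ((t * x₀ - x₁) / (x₀ - x₁))
          (demazureLusztig s₂ t ((t * x₁ - x₂) / (x₁ - x₂)) g)) := by
  refine demazureLusztig_braid (c := (t * x₀ - x₂) / (x₀ - x₂)) hs₁ hs₂ hs ht₁ ht₂ ?_ ?_ ?_ ?_
    (div_sub_yang_baxter t x₀ x₁ x₂ h₀₁ h₁₂ h₀₂) g <;>
    simp only [map_div₀, map_sub, map_mul, ht₁, ht₂, hs₁x₀, hs₁x₁, hs₁x₂, hs₂x₀, hs₂x₁, hs₂x₂]
  · exact div_sub_comm_eq_add_one_sub_div t x₀ x₁ h₀₁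
  · exact div_sub_comm_eq_add_one_sub_div t x₁ x₂ h₁₂

end Field

namespace MvPolynomial

variable (K : Type*) [Field K] {ι : Type*}

noncomputable def renameRingEquivHom : Equiv.Perm ι →* (MvPolynomial ι K ≃+* MvPolynomial ι K) where
  toFun σ := (renameEquiv K σ).toRingEquiv
  map_one' := RingEquiv.ext fun p => rename_id_apply p
  map_mul' σ τ := RingEquiv.ext fun p => (rename_rename τ σ p).symm

noncomputable def renameFractionRingHom :
    Equiv.Perm ι →* (FractionRing (MvPolynomial ι K) ≃+* FractionRing (MvPolynomial ι K)) :=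
  (IsFractionRing.ringEquivOfRingEquivHom _ _).comp (renameRingEquivHom K)

theorem renameFractionRingHom_algebraMap (σ : Equiv.Perm ι) (p : MvPolynomial ι K) :
    renameFractionRingHom K σ (algebraMap _ _ p) = algebraMap _ _ (rename σ p) :=
  IsFractionRing.ringEquivOfRingEquiv_algebraMap _ p

theorem renameFractionRingHom_apply_algebraMap_X (σ : Equiv.Perm ι) (i : ι) :
    renameFractionRingHom K σ (algebraMap (MvPolynomial ι K) _ (X i)) =
      algebraMap (MvPolynomial ι K) _ (X (σ i)) := by
  rw [renameFractionRingHom_algebraMap, rename_X]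

theorem renameFractionRingHom_apply_algebraMap_C (σ : Equiv.Perm ι) (a : K) :
    renameFractionRingHom K σ (algebraMap (MvPolynomial ι K) _ (C a)) =
      algebraMap (MvPolynomial ι K) _ (C a) := by
  rw [renameFractionRingHom_algebraMap, rename_C]

theorem renameFractionRingHom_swap_apply_swap_apply [DecidableEq ι] (i j : ι) (g) :
    renameFractionRingHom K (Equiv.swap i j) (renameFractionRingHom K (Equiv.swap i j) g) = g := by
  rw [← RingAut.mul_apply, ← map_mul, Equiv.swap_mul_self, map_one, RingAut.one_apply]

theorem algebraMap_X_sub_X_ne_zero {i j : ι} (h : i ≠ j) :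
    algebraMap (MvPolynomial ι K) (FractionRing (MvPolynomial ι K)) (X i) -
      algebraMap (MvPolynomial ι K) _ (X j) ≠ 0 := by
  rw [← map_sub, Ne, IsFractionRing.to_map_eq_zero_iff, sub_eq_zero]
  exact fun e => h (X_injective e)

end MvPolynomial

/-- In the field of rational functions `K(x₁,x₂,x₃)` (the fraction field of
`K[x₁,x₂,x₃]`), with `s_i` the automorphism swapping `x_i, x_{i+1}` and the Demazure–Lusztig
operators `T_i f = t·f − ((t·x_i − x_{i+1})/(x_i − x_{i+1}))·(f − s_i f)` for `i = 1, 2`,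
the braid relation `T₁ T₂ T₁ = T₂ T₁ T₂` holds: `T₁(T₂(T₁ f)) = T₂(T₁(T₂ f))` for all `f`. -/
theorem braid_relation (K : Type*) [Field K] (t : K) :
    ∀ f : FractionRing (MvPolynomial (Fin 3) K),
      letI F := FractionRing (MvPolynomial (Fin 3) K)
      letI ι : MvPolynomial (Fin 3) K →+* F := algebraMap _ _
      letI x : Fin 3 → F := fun i => ι (X i)
      letI tF : F := ι (C t)
      letI s1 : F ≃+* F := IsFractionRing.ringEquivOfRingEquiv
        (MvPolynomial.renameEquiv K (Equiv.swap (0 : Fin 3) 1)).toRingEquiv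
      letI s2 : F ≃+* F := IsFractionRing.ringEquivOfRingEquiv
        (MvPolynomial.renameEquiv K (Equiv.swap (1 : Fin 3) 2)).toRingEquiv
      letI T1 : F → F := fun g => tF * g - ((tF * x 0 - x 1) / (x 0 - x 1)) * (g - s1 g)
      letI T2 : F → F := fun g => tF * g - ((tF * x 1 - x 2) / (x 1 - x 2)) * (g - s2 g)
      T1 (T2 (T1 f)) = T2 (T1 (T2 f)) := by
  intro f
  have hs : ∀ g, renameFractionRingHom K (Equiv.swap (1 : Fin 3) 2)
      (renameFractionRingHom K (Equiv.swap 0 1) (renameFractionRingHom K (Equiv.swap 1 2) g)) =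
      renameFractionRingHom K (Equiv.swap 0 1)
        (renameFractionRingHom K (Equiv.swap 1 2) (renameFractionRingHom K (Equiv.swap 0 1) g)) := by
    intro g
    simp only [← RingAut.mul_apply, ← map_mul]
    congr 2
    decide
  exact demazureLusztig_braid_of_swap
    (s₁ := (renameFractionRingHom K (Equiv.swap (0 : Fin 3) 1)).toRingHom)
    (s₂ := (renameFractionRingHom K (Equiv.swap (1 : Fin 3) 2)).toRingHom)
    (renameFractionRingHom_swap_apply_swap_apply K 0 1)
    (renameFractionRingHom_swap_apply_swap_apply K 1 2) hs
    (renameFractionRingHom_apply_algebraMap_C K _ t) (renameFractionRingHom_apply_algebraMap_C K _ t)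
    (renameFractionRingHom_apply_algebraMap_X K _ 0) (renameFractionRingHom_apply_algebraMap_X K _ 1)
    (renameFractionRingHom_apply_algebraMap_X K _ 2) (renameFractionRingHom_apply_algebraMap_X K _ 0)
    (renameFractionRingHom_apply_algebraMap_X K _ 1) (renameFractionRingHom_apply_algebraMap_X K _ 2)
    (algebraMap_X_sub_X_ne_zero K (by decide)) (algebraMap_X_sub_X_ne_zero K (by decide))
    (algebraMap_X_sub_X_ne_zero K (by decide)) f
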